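/- arXiv:1810.01837 — 11 statements merged into one kernel-verified Lean document; each statement's English description precedes it below -/
import Mathlib

section
/- A kernel is s-finite if and only if it is the pushforward (composition with a deterministic kernel of a measurable function) of a σ-finite kernel. Concretely: if ν : X ⇝ Y is s-finite, then there is a σ-finite kernel μ : X ⇝ ℕ × Y with ν = snd_* μ; conversely any pushforward of a σ-finite kernel along a measurable function is s-finite. -/
/-!
Write an s-finite `ν` as `∑ₙ νₙ` with finite `νₙ`. Pushing `νₙ` onto the slice `{n} × Y` makes
the summands mutually singular, with the partition `{n} × Y` of `ℕ × Y`, and forgetting the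
index recovers `ν`. Conversely a σ-finite kernel is in particular a countable sum of finite
kernels, and s-finiteness is preserved by pushforward.
-/

open MeasureTheory ProbabilityTheory

/-- A kernel `k : X ⇝ Y` is σ-finite if it is a countable sum of finite kernels `kₙ` that are
pairwise mutually singular: there is a measurable partition `{Aₙ}` of `X × Y` with each `kₙ x`
supported in the slice `Aₙˣ`. -/
def IsSigmaFiniteKernel {X Y : Type*} [MeasurableSpace X] [MeasurableSpace Y]
    (k : Kernel X Y) : Prop :=
  ∃ (ks : ℕ → Kernel X Y) (A : ℕ → Set (X × Y)),
    (∀ n, IsFiniteKernel (ks n)) ∧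
    (∀ n, MeasurableSet (A n)) ∧
    Pairwise (Function.onFun Disjoint A) ∧
    (⋃ n, A n) = Set.univ ∧
    (∀ n x, ks n x {y | (x, y) ∉ A n} = 0) ∧
    k = Kernel.sum ks

namespace ProbabilityTheory.Kernel

variable {X Y Z : Type*} [MeasurableSpace X] [MeasurableSpace Y] [MeasurableSpace Z]

lemma map_sum {ι : Type*} [Countable ι] (κs : ι → Kernel X Y) {f : Y → Z} (hf : Measurable f) :
    (Kernel.sum κs).map f = Kernel.sum fun i => (κs i).map f := by
  ext x s hs
  rw [map_apply' _ hf _ hs, sum_apply' _ _ (hf hs), sum_apply' _ _ hs]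
  simp_rw [map_apply' _ hf _ hs]

noncomputable def sumTagged (κs : ℕ → Kernel X Y) : Kernel X (ℕ × Y) :=
  Kernel.sum fun n => (κs n).map (Prod.mk n)

lemma map_snd_sumTagged (κs : ℕ → Kernel X Y) : (sumTagged κs).map Prod.snd = Kernel.sum κs := by
  simp_rw [sumTagged, map_sum _ measurable_snd,
    ← map_comp_right _ measurable_prodMk_left measurable_snd]
  exact congrArg Kernel.sum (funext fun n => map_id _)

lemma map_prodMk_apply_compl_fst_preimage (κ : Kernel X Y) (n : ℕ) (x : X) :
    κ.map (Prod.mk n) x (Prod.fst ⁻¹' {n})ᶜ = 0 := by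
  rw [map_apply' _ measurable_prodMk_left _ (measurable_fst (measurableSet_singleton n)).compl]
  convert measure_empty (μ := κ x)
  ext y
  simp

lemma isSigmaFiniteKernel_sumTagged (κs : ℕ → Kernel X Y) [∀ n, IsFiniteKernel (κs n)] :
    IsSigmaFiniteKernel (sumTagged κs) := by
  refine ⟨fun n => (κs n).map (Prod.mk n), fun n => {p : X × ℕ × Y | p.2.1 = n},
    fun n => inferInstance, fun n => measurable_snd.fst (measurableSet_singleton n), ?_, ?_,
    fun n => map_prodMk_apply_compl_fst_preimage (κs n) n, rfl⟩
  · intro m n hmn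
    exact Set.disjoint_left.mpr fun p hm hn => hmn (hm.symm.trans hn)
  · exact Set.eq_univ_of_forall fun p => Set.mem_iUnion.mpr ⟨p.2.1, rfl⟩

end ProbabilityTheory.Kernel

lemma IsSigmaFiniteKernel.isSFiniteKernel {X Y : Type*} [MeasurableSpace X] [MeasurableSpace Y]
    {κ : Kernel X Y} (h : IsSigmaFiniteKernel κ) : IsSFiniteKernel κ := by
  obtain ⟨κs, -, hfin, -, -, -, -, rfl⟩ := h
  exact Kernel.isSFiniteKernel_sum (hκs := fun n => have := hfin n; inferInstance)

/-- A kernel is s-finite iff it is the pushforward of a σ-finite kernel: every s-finite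
`ν : X ⇝ Y` is `snd_* μ` for some σ-finite `μ : X ⇝ ℕ × Y`, and conversely every pushforward of
a σ-finite kernel along a measurable function is s-finite. -/
theorem sfinite_iff_pushforward_sigmaFinite {X Y : Type*} [MeasurableSpace X] [MeasurableSpace Y] :
    (∀ ν : Kernel X Y, IsSFiniteKernel ν →
      ∃ μ : Kernel X (ℕ × Y), IsSigmaFiniteKernel μ ∧ ν = μ.map Prod.snd) ∧
    (∀ (Z W : Type) (_ : MeasurableSpace Z) (_ : MeasurableSpace W)
      (μ : Kernel X Z) (f : Z → W), Measurable f → IsSigmaFiniteKernel μ →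
        IsSFiniteKernel (μ.map f)) := by
  constructor
  · intro ν hν
    exact ⟨Kernel.sumTagged ν.seq, Kernel.isSigmaFiniteKernel_sumTagged _,
      by rw [Kernel.map_snd_sumTagged, Kernel.kernel_sum_seq]⟩
  · rintro Z W _ _ μ f - hμ
    have := hμ.isSFiniteKernel
    infer_instance
end

section
/- For every s-finite kernel ν : X ⇝ Y with Y a standard Borel space, there exists a sub-probability kernel μ : X ⇝ Y and a jointly measurable function f : X × Y → [0,∞] such that ν(x,A) = ∫_A f(x,y) μ(x,dy) for all x, A, and moreover μ(x)({y : f(x,y)=0}) = 0 for all x. -/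
/-!
Write `ν = ∑ₙ κₙ` with finite kernels `κₙ` and let `μ = ∑ₙ wₙ κₙ` with constant weights
`wₙ = 2⁻¹ ^ (n + 1) / (Cₙ + 1)`, where `Cₙ` bounds the total mass of `κₙ`. Then `μ` is a
sub-probability kernel with `μ ≤ ν` and `κₙ(x) ≪ μ(x)`. The Radon–Nikodým theorem for finite
kernels gives jointly measurable densities of the `κₙ` with respect to `μ`, and their sum `f` is a
density of `ν`. Finally `μ(x){f = 0} ≤ ν(x){f = 0} = ∫_{f = 0} f dμ(x) = 0`.
-/

open MeasureTheory ProbabilityTheory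
open scoped ENNReal

lemma ENNReal.tsum_inv_two_pow_succ : ∑' n : ℕ, (2⁻¹ : ℝ≥0∞) ^ (n + 1) = 1 := by
  rw [ENNReal.tsum_geometric_add_one, ENNReal.one_sub_inv_two, inv_inv,
    ENNReal.inv_mul_cancel (by norm_num) (by norm_num)]

lemma MeasureTheory.Measure.measure_setOf_eq_zero_of_le_withDensity {α : Type*}
    [MeasurableSpace α] {μ : Measure α} {f : α → ℝ≥0∞} (hf : Measurable f)
    (hle : μ ≤ μ.withDensity f) : μ {a | f a = 0} = 0 := by
  have hs : MeasurableSet {a | f a = 0} := hf (measurableSet_singleton 0)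
  refine le_antisymm ?_ zero_le
  calc μ {a | f a = 0} ≤ μ.withDensity f {a | f a = 0} := hle _
    _ = ∫⁻ a in {a | f a = 0}, f a ∂μ := withDensity_apply f hs
    _ = 0 := setLIntegral_eq_zero hs fun _ ha => ha

namespace ProbabilityTheory.Kernel

variable {X Y : Type*} [MeasurableSpace X] [MeasurableSpace Y]

noncomputable def subprobWeight (κ : Kernel X Y) (n : ℕ) : ℝ≥0∞ :=
  2⁻¹ ^ (n + 1) * (κ.bound + 1)⁻¹

lemma subprobWeight_ne_zero (κ : Kernel X Y) [IsFiniteKernel κ] (n : ℕ) :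
    subprobWeight κ n ≠ 0 := by
  simp [subprobWeight, κ.bound_ne_top]

lemma subprobWeight_le_one (κ : Kernel X Y) (n : ℕ) : subprobWeight κ n ≤ 1 :=
  mul_le_one' (pow_le_one₀ zero_le (by norm_num)) (ENNReal.inv_le_one.2 le_add_self)

lemma subprobWeight_mul_apply_le (κ : Kernel X Y) [IsFiniteKernel κ] (n : ℕ) (x : X)
    (s : Set Y) : subprobWeight κ n * κ x s ≤ 2⁻¹ ^ (n + 1) :=
  calc subprobWeight κ n * κ x s ≤ 2⁻¹ ^ (n + 1) * ((κ.bound + 1)⁻¹ * (κ.bound + 1)) := by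
        rw [subprobWeight, mul_assoc]
        gcongr
        exact (κ.measure_le_bound x s).trans le_self_add
    _ = 2⁻¹ ^ (n + 1) := by
        rw [ENNReal.inv_mul_cancel (by simp) (by simp [κ.bound_ne_top]), mul_one]

variable (κ : ℕ → Kernel X Y) [∀ n, IsFiniteKernel (κ n)]

noncomputable def subprobSum : Kernel X Y :=
  Kernel.sum fun n => withDensity (κ n) fun _ _ => subprobWeight (κ n) n

lemma subprobSum_apply (x : X) :
    subprobSum κ x = Measure.sum fun n => subprobWeight (κ n) n • κ n x := by
  rw [subprobSum, sum_apply]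
  congr with n : 1
  rw [Kernel.withDensity_apply _ measurable_const, MeasureTheory.withDensity_const]

lemma subprobSum_apply_univ_le_one (x : X) : subprobSum κ x Set.univ ≤ 1 := by
  rw [subprobSum_apply, Measure.sum_apply _ MeasurableSet.univ, ← ENNReal.tsum_inv_two_pow_succ]
  exact ENNReal.tsum_le_tsum fun n => subprobWeight_mul_apply_le (κ n) n x _

instance : IsFiniteKernel (subprobSum κ) :=
  ⟨⟨1, ENNReal.one_lt_top, subprobSum_apply_univ_le_one κ⟩⟩

lemma absolutelyContinuous_subprobSum (n : ℕ) (x : X) : κ n x ≪ subprobSum κ x := by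
  rw [subprobSum_apply]
  exact Measure.absolutelyContinuous_sum_right n
    (Measure.absolutelyContinuous_smul (subprobWeight_ne_zero (κ n) n))

lemma subprobSum_le_sum : subprobSum κ ≤ Kernel.sum κ := fun x => by
  rw [subprobSum_apply, sum_apply, Measure.le_iff]
  intro s hs
  rw [Measure.sum_apply _ hs, Measure.sum_apply _ hs]
  exact ENNReal.tsum_le_tsum fun n => mul_le_of_le_one_left zero_le (subprobWeight_le_one _ n)

lemma sum_apply_eq_withDensity_tsum_rnDeriv [MeasurableSpace.CountableOrCountablyGenerated X Y]
    (μ : Kernel X Y) [IsFiniteKernel μ] (hκμ : ∀ n x, κ n x ≪ μ x) (x : X) :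
    Kernel.sum κ x = (μ x).withDensity fun y => ∑' n, rnDeriv (κ n) μ x y := by
  have hκ n : κ n x = (μ x).withDensity (rnDeriv (κ n) μ x) := by
    rw [← Kernel.withDensity_apply _ (measurable_rnDeriv _ _), withDensity_rnDeriv_eq (hκμ n x)]
  simp_rw [sum_apply, hκ, ← ENNReal.tsum_apply, MeasureTheory.withDensity_tsum fun n =>
    measurable_rnDeriv_right _ _ x]

end ProbabilityTheory.Kernel

/-- Every s-finite kernel `ν : X ⇝ Y` into a standard Borel space `Y` can be written as a
sub-probability kernel `μ` weighted by a jointly measurable density `f` which is moreover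
`μ(x)`-a.e. nonzero. -/
theorem sfinite_eq_subprob_withDensity {X Y : Type*} [MeasurableSpace X] [MeasurableSpace Y]
    [StandardBorelSpace Y] (ν : Kernel X Y) [IsSFiniteKernel ν] :
    ∃ (μ : Kernel X Y) (f : X × Y → ENNReal),
      (∀ x, μ x Set.univ ≤ 1) ∧ Measurable f ∧
      (∀ x A, MeasurableSet A → ν x A = ∫⁻ y in A, f (x, y) ∂(μ x)) ∧
      (∀ x, μ x {y | f (x, y) = 0} = 0) := by
  set μ := Kernel.subprobSum ν.seq
  set f : X × Y → ℝ≥0∞ := fun p => ∑' n, (ν.seq n).rnDeriv μ p.1 p.2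
  have hf : Measurable f := Measurable.tsum fun n => Kernel.measurable_rnDeriv _ _
  have hν x : ν x = (μ x).withDensity fun y => f (x, y) := by
    conv_lhs => rw [← Kernel.kernel_sum_seq ν]
    exact Kernel.sum_apply_eq_withDensity_tsum_rnDeriv _ μ
      (Kernel.absolutelyContinuous_subprobSum _) x
  refine ⟨μ, f, Kernel.subprobSum_apply_univ_le_one _, hf, fun x A hA => ?_, fun x => ?_⟩
  · rw [hν, withDensity_apply _ hA]
  · refine Measure.measure_setOf_eq_zero_of_le_withDensity (hf.comp measurable_prodMk_left) ?_
    rw [← hν]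
    conv_rhs => rw [← Kernel.kernel_sum_seq ν]
    exact Kernel.subprobSum_le_sum _ x
end

section
/- A measure ν on Y is s-finite if and only if there exists a σ-finite measure μ on Y and a measurable function f : Y → {1,∞} such that ν(A) = ∫_A f dμ for all measurable A. Moreover f is unique ν-almost everywhere, and μ(A) is uniquely determined whenever f takes only the value 1 on A. -/
/-!
Write an s-finite `ν` as `τ.withDensity g` with `τ` finite and `g = dν/dτ`. Splitting
`g = h * f`, where `h` is `g` with its infinite values replaced by `1` and `f` is `∞` where `g` is
and `1` elsewhere, gives `ν = (τ.withDensity h).withDensity f` with `τ.withDensity h` σ-finite.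

For uniqueness, let `T` be a set where `f = ∞` and `f' = 1`. Then `μ'.restrict T` is σ-finite, yet
its values `ν (s ∩ T) = ∞ * μ (s ∩ T)` lie in `{0, ∞}`, so it vanishes and `ν T = 0`. Where
`f = f' = 1`, both `μ` and `μ'` agree with `ν`.
-/

open MeasureTheory Set
open scoped ENNReal

namespace MeasureTheory

variable {Y : Type*} [MeasurableSpace Y]

lemma Measure.eq_zero_of_forall_ne_top_imp_eq_zero (ρ : Measure Y) [SigmaFinite ρ]
    (h : ∀ s, MeasurableSet s → ρ s ≠ ∞ → ρ s = 0) : ρ = 0 := by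
  rw [← Measure.measure_univ_eq_zero, ← iUnion_spanningSets ρ]
  exact measure_iUnion_null fun n =>
    h _ (measurableSet_spanningSets ρ n) (measure_spanningSets_lt_top ρ n).ne

lemma withDensity_apply_of_forall_eq_const {μ : Measure Y} {f : Y → ℝ≥0∞} {A : Set Y}
    {c : ℝ≥0∞} (hA : MeasurableSet A) (hf : ∀ y ∈ A, f y = c) :
    μ.withDensity f A = c * μ A := by
  rw [withDensity_apply _ hA, setLIntegral_congr_fun hA hf, setLIntegral_const]

lemma withDensity_apply_eq_zero_of_withDensity_eq {μ μ' : Measure Y} [SigmaFinite μ']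
    {f f' : Y → ℝ≥0∞} {T : Set Y} (hT : MeasurableSet T) (hfT : ∀ y ∈ T, f y = ∞)
    (hf'T : ∀ y ∈ T, f' y = 1) (h : μ.withDensity f = μ'.withDensity f') :
    μ.withDensity f T = 0 := by
  have hν : ∀ s, MeasurableSet s → μ.withDensity f (s ∩ T) = μ' (s ∩ T) := fun s hs => by
    rw [h, withDensity_apply_of_forall_eq_const (hs.inter hT) fun y hy => hf'T y hy.2, one_mul]
  have hμ'T : μ'.restrict T = 0 := by
    refine Measure.eq_zero_of_forall_ne_top_imp_eq_zero _ fun s hs hfin => ?_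
    rw [Measure.restrict_apply hs, ← hν s hs,
      withDensity_apply_of_forall_eq_const (hs.inter hT) fun y hy => hfT y hy.2] at hfin ⊢
    by_contra hne
    exact hfin (ENNReal.top_mul (right_ne_zero_of_mul hne))
  calc μ.withDensity f T = μ'.restrict T univ := by simpa using hν univ MeasurableSet.univ
    _ = 0 := by rw [hμ'T, Measure.coe_zero, Pi.zero_apply]

lemma ae_withDensity_top_imp_top_of_withDensity_eq {μ μ' : Measure Y} [SigmaFinite μ']
    {f f' : Y → ℝ≥0∞} (hf : Measurable f) (hf' : Measurable f')
    (hf'_one_top : ∀ y, f' y = 1 ∨ f' y = ∞) (h : μ.withDensity f = μ'.withDensity f') :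
    ∀ᵐ y ∂μ.withDensity f, f y = ∞ → f' y = ∞ := by
  have hset : {y | ¬(f y = ∞ → f' y = ∞)} = {y | f y = ∞} \ {y | f' y = ∞} := by
    ext; simp
  rw [ae_iff, hset]
  exact withDensity_apply_eq_zero_of_withDensity_eq
    ((hf (measurableSet_singleton ∞)).diff (hf' (measurableSet_singleton ∞)))
    (fun y hy => hy.1) (fun y hy => (hf'_one_top y).resolve_right hy.2) h

lemma withDensity_eq_withDensity_withDensity_one_top (μ : Measure Y) {g : Y → ℝ≥0∞}
    (hg : Measurable g) :
    μ.withDensity g = (μ.withDensity fun y => if g y = ∞ then 1 else g y).withDensity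
      fun y => if g y = ∞ then ∞ else 1 := by
  have hg_top : MeasurableSet {y | g y = ∞} := hg (measurableSet_singleton ∞)
  rw [← withDensity_mul _ (measurable_const.ite hg_top hg)
    (measurable_const.ite hg_top measurable_const)]
  congr 1
  funext y
  by_cases hy : g y = ∞ <;> simp [hy]

lemma exists_sigmaFinite_withDensity_one_top_eq_withDensity (τ : Measure Y) [SigmaFinite τ]
    {g : Y → ℝ≥0∞} (hg : Measurable g) :
    ∃ (μ : Measure Y) (f : Y → ℝ≥0∞), SigmaFinite μ ∧ Measurable f ∧
      (∀ y, f y = 1 ∨ f y = ∞) ∧ τ.withDensity g = μ.withDensity f := by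
  refine ⟨_, _, SigmaFinite.withDensity_of_ne_top' fun y => ?_,
    measurable_const.ite (hg (measurableSet_singleton ∞)) measurable_const, fun y => ?_,
    withDensity_eq_withDensity_withDensity_one_top τ hg⟩
  · split_ifs with hy
    exacts [ENNReal.one_ne_top, hy]
  · by_cases hy : g y = ∞ <;> simp [hy]

end MeasureTheory

/-- A measure `ν` is s-finite iff `ν = μ.withDensity f` for a σ-finite `μ` and a measurable
`f : Y → {1, ∞}`.  Moreover `f` is unique `ν`-a.e., and `μ A` is uniquely determined on
measurable sets `A` on which `f` only takes the value `1`. -/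
theorem sfinite_iff_sigmaFinite_withDensity_one_top {Y : Type*} [MeasurableSpace Y]
    (ν : Measure Y) :
    (SFinite ν ↔ ∃ (μ : Measure Y) (f : Y → ENNReal), SigmaFinite μ ∧ Measurable f ∧
      (∀ y, f y = 1 ∨ f y = ⊤) ∧ ν = μ.withDensity f) ∧
    (∀ (μ μ' : Measure Y) (f f' : Y → ENNReal), SigmaFinite μ → SigmaFinite μ' →
      Measurable f → Measurable f' → (∀ y, f y = 1 ∨ f y = ⊤) → (∀ y, f' y = 1 ∨ f' y = ⊤) →
      ν = μ.withDensity f → ν = μ'.withDensity f' →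
      (f =ᵐ[ν] f') ∧
      (∀ A, MeasurableSet A → (∀ y ∈ A, f y = 1) → (∀ y ∈ A, f' y = 1) → μ A = μ' A)) := by
  refine ⟨⟨fun hν => ?_, ?_⟩, ?_⟩
  · rw [← Measure.withDensity_rnDeriv_eq ν ν.toFinite (absolutelyContinuous_toFinite ν)]
    exact exists_sigmaFinite_withDensity_one_top_eq_withDensity _ (ν.measurable_rnDeriv _)
  · rintro ⟨μ, f, hμ, -, -, rfl⟩
    infer_instance
  · intro μ μ' f f' hμ hμ' hf hf' hf_one_top hf'_one_top hν hν'
    refine ⟨?_, fun A hA hfA hf'A => ?_⟩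
    · have hf_top := ae_withDensity_top_imp_top_of_withDensity_eq hf hf' hf'_one_top (hν ▸ hν')
      have hf'_top := ae_withDensity_top_imp_top_of_withDensity_eq hf' hf hf_one_top (hν' ▸ hν)
      rw [← hν] at hf_top
      rw [← hν'] at hf'_top
      filter_upwards [hf_top, hf'_top] with y hy hy'
      rcases hf_one_top y with h | h <;> rcases hf'_one_top y with h' | h' <;> simp_all
    · calc μ A = ν A := by rw [hν, withDensity_apply_of_forall_eq_const hA hfA, one_mul]
        _ = μ' A := by rw [hν', withDensity_apply_of_forall_eq_const hA hf'A, one_mul]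
end

section
/- Every s-finite measure μ on X admits a top 0-∞ set: there exists a measurable set A such that every measurable subset of A has μ-measure 0 or ∞, and for every measurable set B with the same 0-∞ property, μ(B \ A) = 0. Such an A is unique up to μ-null sets. -/
open MeasureTheory

/-- `U` is a 0-∞ set for `μ`: `U` is measurable and every measurable subset of `U` has
`μ`-measure `0` or `∞`. -/
def IsZeroInftySet {X : Type*} [MeasurableSpace X] (μ : Measure X) (U : Set X) : Prop :=
  MeasurableSet U ∧ ∀ V, V ⊆ U → MeasurableSet V → μ V = 0 ∨ μ V = ⊤

/-- Every s-finite measure admits a top 0-∞ set, and it is unique up to null sets. -/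
theorem exists_top_zeroInftySet {X : Type*} [MeasurableSpace X] (μ : Measure X) [SFinite μ] :
    (∃ A, IsZeroInftySet μ A ∧ ∀ B, IsZeroInftySet μ B → μ (B \ A) = 0) ∧
    (∀ A A', (IsZeroInftySet μ A ∧ ∀ B, IsZeroInftySet μ B → μ (B \ A) = 0) →
      (IsZeroInftySet μ A' ∧ ∀ B, IsZeroInftySet μ B → μ (B \ A') = 0) →
      μ (A \ A') = 0 ∧ μ (A' \ A) = 0) := by
  constructor
  · refine ⟨μ.sigmaFiniteSetᶜ, ⟨measurableSet_sigmaFiniteSet.compl,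
      fun V hV _ ↦ measure_eq_zero_or_top_of_subset_compl_sigmaFiniteSet hV⟩, ?_⟩
    rintro B ⟨hBm, hB⟩
    have hC : B \ μ.sigmaFiniteSetᶜ = B ∩ μ.sigmaFiniteSet := by
      ext x; simp [Set.mem_diff]
    rw [hC]
    -- B ∩ sigmaFiniteSet is covered by spanning sets of the σ-finite restriction
    have hσ : SigmaFinite (μ.restrict μ.sigmaFiniteSet) := inferInstance
    have hcover : B ∩ μ.sigmaFiniteSet =
        ⋃ n, B ∩ μ.sigmaFiniteSet ∩ spanningSets (μ.restrict μ.sigmaFiniteSet) n := by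
      rw [← Set.inter_iUnion, iUnion_spanningSets, Set.inter_univ]
    rw [hcover]
    refine measure_iUnion_null fun n ↦ ?_
    set s := B ∩ μ.sigmaFiniteSet ∩ spanningSets (μ.restrict μ.sigmaFiniteSet) n with hs
    have hsm : MeasurableSet s :=
      (hBm.inter measurableSet_sigmaFiniteSet).inter (measurableSet_spanningSets _ n)
    have hlt : μ s < ⊤ := by
      calc μ s ≤ μ (μ.sigmaFiniteSet ∩ spanningSets (μ.restrict μ.sigmaFiniteSet) n) :=
            measure_mono fun x hx ↦ ⟨hx.1.2, hx.2⟩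
        _ = μ.restrict μ.sigmaFiniteSet (spanningSets (μ.restrict μ.sigmaFiniteSet) n) := by
            rw [Measure.restrict_apply' measurableSet_sigmaFiniteSet, Set.inter_comm]
        _ < ⊤ := measure_spanningSets_lt_top _ n
    rcases hB s (fun x hx ↦ hx.1.1) hsm with h | h
    · exact h
    · exact absurd h hlt.ne
  · rintro A A' ⟨hA, hAtop⟩ ⟨hA', hA'top⟩
    exact ⟨hA'top A hA, hAtop A' hA'⟩
end

section
/- An s-finite measure μ is σ-finite if and only if every 0-∞ set of μ is μ-null (i.e. its top 0-∞ set is trivial). -/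
open MeasureTheory

/-- An s-finite measure is σ-finite iff all of its 0-∞ sets are null. -/
theorem sigmaFinite_iff_zeroInftySets_null {X : Type*} [MeasurableSpace X]
    (μ : Measure X) [SFinite μ] :
    SigmaFinite μ ↔ ∀ U, IsZeroInftySet μ U → μ U = 0 := by
  constructor
  · intro hσ U hU
    have : U = ⋃ n, U ∩ spanningSets μ n := by
      rw [← Set.inter_iUnion, iUnion_spanningSets, Set.inter_univ]
    rw [this]
    refine measure_iUnion_null fun n => ?_
    rcases hU.2 (U ∩ spanningSets μ n) Set.inter_subset_left
        (hU.1.inter (measurableSet_spanningSets μ n)) with h | h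
    · exact h
    · exact absurd h (lt_of_le_of_lt (measure_mono Set.inter_subset_right)
        (measure_spanningSets_lt_top μ n)).ne
  · intro h
    refine sigmaFinite_of_measure_compl_sigmaFiniteSet_eq_zero (h _ ?_)
    exact ⟨measurableSet_sigmaFiniteSet.compl,
      fun V hV _ => measure_eq_zero_or_top_of_subset_compl_sigmaFiniteSet hV⟩
end

section
/- Radon–Nikodým theorem for s-finite measures: if ν and ν′ are s-finite measures on Y with ν′ ≪ ν and every 0-∞ set of ν is a 0-∞ set of ν′, then there exists a measurable f : Y → [0,∞] with ν′(A) = ∫_A f dν for all measurable A. -/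
open MeasureTheory

/-- Radon–Nikodým theorem for s-finite measures: if `ν' ≪ ν` and every 0-∞ set of `ν` is a
0-∞ set of `ν'`, then `ν'` has a measurable density w.r.t. `ν`. -/
theorem radonNikodym_sfinite {Y : Type*} [MeasurableSpace Y]
    (ν ν' : Measure Y) [SFinite ν] [SFinite ν'] (hac : ν' ≪ ν)
    (hinfty : ∀ U, IsZeroInftySet ν U → IsZeroInftySet ν' U) :
    ∃ f : Y → ENNReal, Measurable f ∧ ν' = ν.withDensity f := by
  classical
  set S : Set Y := ν.sigmaFiniteSet with hS
  have hSm : MeasurableSet S := measurableSet_sigmaFiniteSet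
  set G : Set Y := ν'.sigmaFiniteSetWRT ν with hG
  have hGm : MeasurableSet G := measurableSet_sigmaFiniteSetWRT
  set T : Set Y := Sᶜ ∩ Gᶜ with hT
  have hTm : MeasurableSet T := hSm.compl.inter hGm.compl
  -- absolute continuity of restrictions
  have hacS : ν'.restrict S ≪ ν.restrict S := by
    refine Measure.AbsolutelyContinuous.mk (fun A hA hA0 => ?_)
    rw [Measure.restrict_apply hA] at hA0 ⊢
    exact hac hA0
  -- Radon-Nikodym on S
  have hsf : SigmaFinite (ν.restrict S) := by rw [hS]; infer_instance
  set f₀ : Y → ENNReal := (ν'.restrict S).rnDeriv (ν.restrict S) with hf₀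
  have hf₀m : Measurable f₀ := Measure.measurable_rnDeriv _ _
  have hRN : (ν.restrict S).withDensity f₀ = ν'.restrict S :=
    Measure.withDensity_rnDeriv_eq _ _ hacS
  -- Sᶜ is a 0-∞ set for ν, hence for ν'
  have hScompl : IsZeroInftySet ν' Sᶜ := by
    refine hinfty _ ⟨hSm.compl, fun V hV hVm => ?_⟩
    exact measure_eq_zero_or_top_of_subset_compl_sigmaFiniteSet hV
  -- ν' (Sᶜ ∩ G) = 0
  have hν'SG : ν' (Sᶜ ∩ G) = 0 := by
    have hsfG : SigmaFinite (ν'.restrict G) := by rw [hG]; infer_instance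
    have : Sᶜ ∩ G = ⋃ n, Sᶜ ∩ G ∩ spanningSets (ν'.restrict G) n := by
      rw [← Set.inter_iUnion, iUnion_spanningSets, Set.inter_univ]
    rw [this]
    refine measure_iUnion_null fun n => ?_
    have hfin : ν' (Sᶜ ∩ G ∩ spanningSets (ν'.restrict G) n) ≠ ⊤ := by
      refine ne_of_lt (lt_of_le_of_lt ?_ (measure_spanningSets_lt_top (ν'.restrict G) n))
      rw [Measure.restrict_apply (measurableSet_spanningSets (ν'.restrict G) n)]
      exact measure_mono (fun y hy => ⟨hy.2, hy.1.2⟩)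
    rcases hScompl.2 _ (fun y hy => hy.1.1) ((hSm.compl.inter hGm).inter
      (measurableSet_spanningSets (ν'.restrict G) n)) with h | h
    · exact h
    · exact absurd h hfin
  -- on T, ν' B = ∞ * ν B  for measurable B ⊆ T
  have hTkey : ∀ B ⊆ T, MeasurableSet B → ν' B = ⊤ * ν B := by
    intro B hB hBm
    rcases eq_or_ne (ν B) 0 with h0 | h0
    · rw [h0, mul_zero, hac h0]
    · rw [measure_eq_top_of_subset_compl_sigmaFiniteSetWRT
        (fun y hy => (hB hy).2) h0]
      rw [ENNReal.top_mul h0]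
  refine ⟨S.indicator f₀ + T.indicator (fun _ => ⊤),
    (hf₀m.indicator hSm).add (measurable_const.indicator hTm), ?_⟩
  rw [withDensity_add_left (hf₀m.indicator hSm), withDensity_indicator hSm,
    withDensity_indicator hTm, hRN]
  ext A hA
  have hdisj : ν' (A ∩ Sᶜ) = ν' (A ∩ T) := by
    have : A ∩ Sᶜ = (A ∩ (Sᶜ ∩ G)) ∪ (A ∩ T) := by
      rw [hT, ← Set.inter_union_distrib_left, ← Set.inter_union_distrib_left,
        Set.union_compl_self, Set.inter_univ]
    rw [this]
    refine le_antisymm ?_ (measure_mono Set.subset_union_right)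
    refine (measure_union_le _ _).trans ?_
    rw [measure_mono_null Set.inter_subset_right hν'SG, zero_add]
  have hwT : (ν.restrict T).withDensity (fun _ => (⊤ : ENNReal)) A = ν' (A ∩ T) := by
    rw [withDensity_apply _ hA, setLIntegral_const, Measure.restrict_apply hA,
      hTkey _ Set.inter_subset_right (hA.inter hTm), mul_comm]
  rw [Measure.add_apply, Measure.restrict_apply hA, hwT,
    ← measure_inter_add_diff A hSm, Set.diff_eq, hdisj]
end

section
/- Uniqueness of Radon–Nikodým derivatives for s-finite measures: let ν be s-finite with top 0-∞ set A, and suppose ν′ = ν·f (withDensity). Then for measurable g : X → [0,∞], ν′ = ν·g if and only if ν({f ≠ g} ∩ Aᶜ) = 0 and ν({g = 0 ≠ f} ∩ A) = 0 and ν({f = 0 ≠ g} ∩ A) = 0. -/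
open MeasureTheory

lemma zi_withDensity {X : Type*} [MeasurableSpace X] (μ : Measure X)
    (h : ∀ s, MeasurableSet s → μ s = 0 ∨ μ s = ⊤) {f : X → ENNReal} (hf : Measurable f) :
    μ.withDensity f = μ.restrict {x | f x ≠ 0} := by
  have hS : MeasurableSet {x | f x ≠ 0} := (hf (measurableSet_singleton 0)).compl
  ext B hB
  rw [withDensity_apply _ hB, Measure.restrict_apply hB]
  rcases h (B ∩ {x | f x ≠ 0}) (hB.inter hS) with h0 | htop
  · rw [h0]
    have hae : f =ᵐ[μ.restrict B] 0 := by
      rw [Filter.EventuallyEq, ae_iff]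
      rw [Measure.restrict_apply₀']
      · refine measure_mono_null ?_ h0
        intro x hx
        simp only [Set.mem_inter_iff, Set.mem_setOf_eq, Pi.zero_apply] at hx ⊢
        exact ⟨hx.2, hx.1⟩
      · exact hB.nullMeasurableSet
    rw [lintegral_congr_ae hae]
    simp
  · rw [htop]
    have hU : B ∩ {x | f x ≠ 0} = ⋃ n : ℕ, B ∩ {x | ((n : ENNReal)+1)⁻¹ ≤ f x} := by
      ext x
      simp only [Set.mem_inter_iff, Set.mem_setOf_eq, Set.mem_iUnion]
      constructor
      · rintro ⟨hxB, hx⟩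
        obtain ⟨n, hn⟩ := ENNReal.exists_inv_nat_lt hx
        refine ⟨n, hxB, le_trans ?_ hn.le⟩
        gcongr
        exact_mod_cast le_of_lt (Nat.lt_succ_self n)
      · rintro ⟨n, hxB, hn⟩
        refine ⟨hxB, fun h0 => ?_⟩
        rw [h0] at hn
        simp at hn
    obtain ⟨n, hn⟩ : ∃ n : ℕ, μ (B ∩ {x | ((n : ENNReal)+1)⁻¹ ≤ f x}) ≠ 0 := by
      by_contra hall
      push_neg at hall
      have : μ (B ∩ {x | f x ≠ 0}) = 0 := by
        rw [hU]
        exact measure_iUnion_null hall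
      rw [this] at htop
      simp at htop
    have hBn : MeasurableSet (B ∩ {x | ((n : ENNReal)+1)⁻¹ ≤ f x}) :=
      hB.inter (hf measurableSet_Ici)
    have hmem : B ∩ {x | ((n : ENNReal)+1)⁻¹ ≤ f x} ⊆ B ∩ {x | f x ≠ 0} := by
      intro x hx
      refine ⟨hx.1, fun h0 => ?_⟩
      have h2 := hx.2
      rw [Set.mem_setOf_eq, h0] at h2
      simp at h2
    have htopn : μ (B ∩ {x | ((n : ENNReal)+1)⁻¹ ≤ f x}) = ⊤ := by
      rcases h _ hBn with h0 | ht
      · exact absurd h0 hn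
      · exact ht
    have hle : ((n : ENNReal)+1)⁻¹ * μ (B ∩ {x | ((n : ENNReal)+1)⁻¹ ≤ f x})
        ≤ ∫⁻ a in B, f a ∂μ := by
      calc ((n : ENNReal)+1)⁻¹ * μ (B ∩ {x | ((n : ENNReal)+1)⁻¹ ≤ f x})
          = ∫⁻ _ in B ∩ {x | ((n : ENNReal)+1)⁻¹ ≤ f x}, ((n : ENNReal)+1)⁻¹ ∂μ := by
            rw [setLIntegral_const, mul_comm]
        _ ≤ ∫⁻ a in B ∩ {x | ((n : ENNReal)+1)⁻¹ ≤ f x}, f a ∂μ := by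
            refine setLIntegral_mono hf fun x hx => hx.2
        _ ≤ ∫⁻ a in B, f a ∂μ := lintegral_mono_set Set.inter_subset_left
    rw [htopn, ENNReal.mul_top (by simp)] at hle
    exact top_le_iff.mp hle

lemma zi_restrict_eq_iff {X : Type*} [MeasurableSpace X] (μ : Measure X) {S T : Set X}
    (hS : MeasurableSet S) (hT : MeasurableSet T) :
    μ.restrict S = μ.restrict T ↔ μ (S \ T) = 0 ∧ μ (T \ S) = 0 := by
  constructor
  · intro h
    constructor
    · have := congrArg (fun m : Measure X => m (S \ T)) h
      simpa [Measure.restrict_apply (hS.diff hT), Set.diff_inter_self,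
        Set.inter_eq_self_of_subset_left Set.diff_subset] using this
    · have := congrArg (fun m : Measure X => m (T \ S)) h
      simpa [Measure.restrict_apply (hT.diff hS), Set.diff_inter_self,
        Set.inter_eq_self_of_subset_left Set.diff_subset] using this.symm
  · rintro ⟨h1, h2⟩
    ext B hB
    rw [Measure.restrict_apply hB, Measure.restrict_apply hB]
    apply le_antisymm
    · calc μ (B ∩ S) ≤ μ ((B ∩ T) ∪ (S \ T)) := by
            apply measure_mono; intro x hx
            by_cases hxT : x ∈ T
            · exact Or.inl ⟨hx.1, hxT⟩
            · exact Or.inr ⟨hx.2, hxT⟩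
        _ ≤ μ (B ∩ T) + μ (S \ T) := measure_union_le _ _
        _ = μ (B ∩ T) := by rw [h1, add_zero]
    · calc μ (B ∩ T) ≤ μ ((B ∩ S) ∪ (T \ S)) := by
            apply measure_mono; intro x hx
            by_cases hxS : x ∈ S
            · exact Or.inl ⟨hx.1, hxS⟩
            · exact Or.inr ⟨hx.2, hxS⟩
        _ ≤ μ (B ∩ S) + μ (T \ S) := measure_union_le _ _
        _ = μ (B ∩ S) := by rw [h2, add_zero]

set_option maxHeartbeats 1000000 in
/-- Uniqueness of Radon–Nikodým derivatives for s-finite measures: with `A` a top 0-∞ set of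
`ν`, two densities of the same measure agree `ν`-a.e. outside `A`, and on `A` their zero sets
agree up to `ν`-null sets. -/
theorem radonNikodym_unique_sfinite {X : Type*} [MeasurableSpace X]
    (ν : Measure X) [SFinite ν] (A : Set X)
    (hA : IsZeroInftySet ν A ∧ ∀ B, IsZeroInftySet ν B → ν (B \ A) = 0)
    (ν' : Measure X) (f g : X → ENNReal) (hf : Measurable f) (hg : Measurable g)
    (hν' : ν' = ν.withDensity f) :
    ν' = ν.withDensity g ↔
      ν ({x | f x ≠ g x} ∩ Aᶜ) = 0 ∧
      ν ({x | g x = 0 ∧ f x ≠ 0} ∩ A) = 0 ∧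
      ν ({x | f x = 0 ∧ g x ≠ 0} ∩ A) = 0 := by
  obtain ⟨⟨hAm, hA0⟩, hAtop⟩ := hA
  subst hν'
  -- σ-finiteness of the restriction to Aᶜ
  haveI hSF : SigmaFinite (ν.restrict Aᶜ) := by
    have hzi : IsZeroInftySet ν ν.sigmaFiniteSetᶜ :=
      ⟨measurableSet_sigmaFiniteSet.compl,
        fun V hVs _ => measure_eq_zero_or_top_of_subset_compl_sigmaFiniteSet hVs⟩
    have hnull : ν (ν.sigmaFiniteSetᶜ \ A) = 0 := hAtop _ hzi
    have heq : ν.restrict Aᶜ = (ν.restrict ν.sigmaFiniteSet).restrict Aᶜ := by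
      rw [Measure.restrict_restrict hAm.compl]
      ext B hB
      rw [Measure.restrict_apply hB, Measure.restrict_apply hB]
      apply le_antisymm
      · calc ν (B ∩ Aᶜ) ≤ ν ((B ∩ (Aᶜ ∩ ν.sigmaFiniteSet)) ∪ (ν.sigmaFiniteSetᶜ \ A)) := by
              apply measure_mono
              rintro x ⟨hxB, hxA⟩
              by_cases hxS : x ∈ ν.sigmaFiniteSet
              · exact Or.inl ⟨hxB, hxA, hxS⟩
              · exact Or.inr ⟨hxS, hxA⟩
          _ ≤ ν (B ∩ (Aᶜ ∩ ν.sigmaFiniteSet)) + ν (ν.sigmaFiniteSetᶜ \ A) :=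
              measure_union_le _ _
          _ = ν (B ∩ (Aᶜ ∩ ν.sigmaFiniteSet)) := by rw [hnull, add_zero]
      · exact measure_mono (by intro x hx; exact ⟨hx.1, hx.2.1⟩)
    rw [heq]
    infer_instance
  -- the 0-∞ part
  have hzfull : ∀ s, MeasurableSet s → ν.restrict A s = 0 ∨ ν.restrict A s = ⊤ := by
    intro s hs
    rw [Measure.restrict_apply hs]
    exact hA0 _ Set.inter_subset_right (hs.inter hAm)
  have hSf : MeasurableSet {x | f x ≠ 0} := (hf (measurableSet_singleton 0)).compl
  have hSg : MeasurableSet {x | g x ≠ 0} := (hg (measurableSet_singleton 0)).compl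
  -- split the equality of measures along A
  have hsplit : (ν.withDensity f = ν.withDensity g) ↔
      ((ν.restrict A).withDensity f = (ν.restrict A).withDensity g ∧
       (ν.restrict Aᶜ).withDensity f = (ν.restrict Aᶜ).withDensity g) := by
    constructor
    · intro h
      constructor
      · rw [← restrict_withDensity hAm, ← restrict_withDensity hAm, h]
      · rw [← restrict_withDensity hAm.compl, ← restrict_withDensity hAm.compl, h]
    · rintro ⟨h1, h2⟩
      have := Measure.restrict_add_restrict_compl (μ := ν.withDensity f) hAm
      rw [← Measure.restrict_add_restrict_compl (μ := ν.withDensity f) hAm,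
        ← Measure.restrict_add_restrict_compl (μ := ν.withDensity g) hAm,
        restrict_withDensity hAm, restrict_withDensity hAm.compl,
        restrict_withDensity hAm, restrict_withDensity hAm.compl, h1, h2]
  rw [hsplit]
  -- Aᶜ part
  have hcompl : ((ν.restrict Aᶜ).withDensity f = (ν.restrict Aᶜ).withDensity g) ↔
      ν ({x | f x ≠ g x} ∩ Aᶜ) = 0 := by
    rw [withDensity_eq_iff_of_sigmaFinite hf.aemeasurable hg.aemeasurable]
    rw [Filter.EventuallyEq, ae_iff,
      Measure.restrict_apply₀' hAm.compl.nullMeasurableSet]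
  -- A part
  have hApart : ((ν.restrict A).withDensity f = (ν.restrict A).withDensity g) ↔
      (ν ({x | g x = 0 ∧ f x ≠ 0} ∩ A) = 0 ∧ ν ({x | f x = 0 ∧ g x ≠ 0} ∩ A) = 0) := by
    rw [zi_withDensity _ hzfull hf, zi_withDensity _ hzfull hg,
      zi_restrict_eq_iff _ hSf hSg]
    have e1 : {x | f x ≠ 0} \ {x | g x ≠ 0} = {x | g x = 0 ∧ f x ≠ 0} := by
      ext x
      simp only [Set.mem_diff, Set.mem_setOf_eq, not_not]
      exact and_comm
    have e2 : {x | g x ≠ 0} \ {x | f x ≠ 0} = {x | f x = 0 ∧ g x ≠ 0} := by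
      ext x
      simp only [Set.mem_diff, Set.mem_setOf_eq, not_not]
      exact and_comm
    have m1 : MeasurableSet {x | g x = 0 ∧ f x ≠ 0} :=
      (hg (measurableSet_singleton 0)).inter hSf
    have m2 : MeasurableSet {x | f x = 0 ∧ g x ≠ 0} :=
      (hf (measurableSet_singleton 0)).inter hSg
    rw [e1, e2, Measure.restrict_apply m1, Measure.restrict_apply m2]
  rw [hcompl, hApart]
  constructor
  · rintro ⟨⟨h2, h3⟩, h1⟩
    exact ⟨h1, h2, h3⟩
  · rintro ⟨h1, h2, h3⟩
    exact ⟨⟨h2, h3⟩, h1⟩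
end

section
/- Product measures of s-finite measures are not unique: for μ = ν = ∞·λ on ℝ (with λ Lebesgue measure), the iterated-integral product assigns measure 0 to the diagonal {(r,r) : r ∈ ℝ}, while the maximal (Carathéodory) product measure assigns it measure ∞. -/
open MeasureTheory

/-- Product measures of s-finite measures are not unique: for `μ = ν = ∞ · λ` on `ℝ`, the
iterated-integral product gives the diagonal measure `0`, while the maximal (Carathéodory)
product gives it measure `∞`. -/
theorem sfinite_product_measure_not_unique :
    (∫⁻ x, ((⊤ : ENNReal) • (volume : Measure ℝ)) {y : ℝ | x = y}
        ∂((⊤ : ENNReal) • (volume : Measure ℝ)) = 0) ∧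
    (⨅ (A : ℕ → Set ℝ) (B : ℕ → Set ℝ) (_ : ∀ n, MeasurableSet (A n))
        (_ : ∀ n, MeasurableSet (B n))
        (_ : {p : ℝ × ℝ | p.1 = p.2} ⊆ ⋃ n, (A n) ×ˢ (B n)),
        ∑' n, ((⊤ : ENNReal) • (volume : Measure ℝ)) (A n) *
          ((⊤ : ENNReal) • (volume : Measure ℝ)) (B n)) = ⊤ := by
  constructor
  · have h : ∀ x : ℝ, ((⊤ : ENNReal) • (volume : Measure ℝ)) {y : ℝ | x = y} = 0 := by
      intro x
      have hx : {y : ℝ | x = y} = {x} := by ext y; simp [eq_comm]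
      rw [hx, Measure.smul_apply, Real.volume_singleton]
      simp
    simp [h]
  · simp only [iInf_eq_top]
    intro A B _ _ hcov
    have hcover : (Set.univ : Set ℝ) ⊆ ⋃ n, A n ∩ B n := by
      intro x _
      have hx := hcov (show ((x, x) : ℝ × ℝ) ∈ {p : ℝ × ℝ | p.1 = p.2} from rfl)
      simp only [Set.mem_iUnion, Set.mem_prod] at hx
      obtain ⟨n, h1, h2⟩ := hx
      exact Set.mem_iUnion.2 ⟨n, h1, h2⟩
    have htop : volume (⋃ n, A n ∩ B n) = ⊤ := by
      refine top_le_iff.1 ?_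
      calc (⊤ : ENNReal) = volume (Set.univ : Set ℝ) := Real.volume_univ.symm
        _ ≤ _ := measure_mono hcover
    obtain ⟨n, hn⟩ : ∃ n, volume (A n ∩ B n) ≠ 0 := by
      by_contra h
      push_neg at h
      exact absurd (measure_iUnion_null h ▸ htop) (by simp)
    have hA0 : volume (A n) ≠ 0 := fun h0 =>
      hn (measure_mono_null Set.inter_subset_left h0)
    have hB0 : volume (B n) ≠ 0 := fun h0 =>
      hn (measure_mono_null Set.inter_subset_right h0)
    refine eq_top_iff.2 (le_trans ?_ (ENNReal.le_tsum n))
    rw [Measure.smul_apply, Measure.smul_apply, smul_eq_mul, smul_eq_mul,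
      ENNReal.top_mul hA0, ENNReal.top_mul hB0, ENNReal.top_mul_top]
end

section
/- Lebesgue decomposition for s-finite measures with an infinity part: given s-finite measures k and l on a standard Borel space Y, k decomposes as k = k_a + k_∞ + k_s where k_a ≪ l and every 0-∞ set of l is a 0-∞ set of k_a; k_∞ ≪ l, k_∞ is σ-finite, and k_∞ is supported on a 0-∞ set of l; and k_s ⟂ l. The three parts are mutually singular and the decomposition is unique. -/
open MeasureTheory

/-- `(ka, ki, ks)` is a Lebesgue-type decomposition of `k` relative to `l`, with an
absolutely continuous part `ka` (0-∞-absolutely continuous w.r.t. `l`), an "infinity" part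
`ki` (absolutely continuous, σ-finite and supported on a 0-∞ set of `l`) and a singular part
`ks`, the three parts being mutually singular. -/
def IsLebesgueInftyDecomp {Y : Type*} [MeasurableSpace Y]
    (k l ka ki ks : Measure Y) : Prop :=
  k = ka + ki + ks ∧
  (ka ≪ l ∧ ∀ U, IsZeroInftySet l U → IsZeroInftySet ka U) ∧
  (ki ≪ l ∧ SigmaFinite ki ∧ ∃ U, IsZeroInftySet l U ∧ ki Uᶜ = 0) ∧
  ks ⟂ₘ l ∧
  ka ⟂ₘ ki ∧ ka ⟂ₘ ks ∧ ki ⟂ₘ ks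

/-!
Existence: split `k = m + ks` with `m ≪ l` and `ks ⟂ l` (Lebesgue decomposition with respect
to a finite measure equivalent to `l`), and let `ki` be the restriction of `m` to the set where
`m` is σ-finite but `l` is not. Off this set, `m` is either dominated by the σ-finite part of
`l`, which no 0-∞ set of `l` charges, or takes only the values `0` and `∞`.

Uniqueness: each of the three parts is the restriction of `k` to a set, and for two
decompositions these sets can be chosen in common. For `ka` and `ki`, the key point is that a
measure which is 0-∞ on a set `D` and dominated there by a σ-finite measure vanishes on `D`;
hence the support of one infinity part is null for the other absolutely continuous part.
-/

open Measure Set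

section

variable {X : Type*} [MeasurableSpace X] {μ ν : Measure X} {U D : Set X}

namespace IsZeroInftySet

lemma restrict (hU : IsZeroInftySet μ U) (hD : MeasurableSet D) :
    IsZeroInftySet (μ.restrict D) U :=
  ⟨hU.1, fun V hVU hV => by
    rw [restrict_apply hV]
    exact hU.2 _ (inter_subset_left.trans hVU) (hV.inter hD)⟩

lemma measure_eq_zero [SigmaFinite μ] (hU : IsZeroInftySet μ U) : μ U = 0 := by
  rw [← inter_univ U, ← iUnion_spanningSets μ, inter_iUnion]
  refine measure_iUnion_null fun n => ?_
  exact (hU.2 _ inter_subset_left (hU.1.inter (measurableSet_spanningSets μ n))).resolve_right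
    ((measure_mono inter_subset_right).trans_lt (measure_spanningSets_lt_top μ n)).ne

lemma measure_inter_eq_zero (hU : IsZeroInftySet μ U) (hD : MeasurableSet D)
    [SigmaFinite (μ.restrict D)] : μ (U ∩ D) = 0 := by
  rw [← restrict_apply hU.1]
  exact (hU.restrict hD).measure_eq_zero

lemma measure_eq_zero_of_restrict_le [SigmaFinite ν] (hU : IsZeroInftySet μ U)
    (hD : MeasurableSet D) (hDU : D ⊆ U) (hle : μ.restrict D ≤ ν) : μ D = 0 := by
  have : SigmaFinite (μ.restrict D) := sigmaFinite_of_le ν hle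
  simpa [inter_eq_right.mpr hDU] using hU.measure_inter_eq_zero hD

lemma measure_eq_zero_of_add_eq_add {ka ki ka' ki' : Measure X} [SigmaFinite ki]
    (hm : ka + ki = ka' + ki') (hU : IsZeroInftySet ka' U) (hDU : D ⊆ U) (hD : MeasurableSet D)
    (hkaD : ka D = 0) : ka' D = 0 := by
  refine hU.measure_eq_zero_of_restrict_le (ν := ki) hD hDU ?_
  calc ka'.restrict D ≤ (ka' + ki').restrict D :=
        restrict_mono subset_rfl (Measure.le_add_right le_rfl)
    _ = ki.restrict D := by rw [← hm, restrict_add, restrict_eq_zero.mpr hkaD, zero_add]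
    _ ≤ ki := restrict_le_self

end IsZeroInftySet

lemma isZeroInftySet_compl_sigmaFiniteSet [SFinite μ] : IsZeroInftySet μ μ.sigmaFiniteSetᶜ :=
  ⟨measurableSet_sigmaFiniteSet.compl,
    fun _ hV _ => measure_eq_zero_or_top_of_subset_compl_sigmaFiniteSet hV⟩

namespace MeasureTheory.Measure

lemma restrict_add_eq_and_restrict_compl_add_eq {α β : Measure X} {s : Set X}
    (hα : α sᶜ = 0) (hβ : β s = 0) : (α + β).restrict s = α ∧ (α + β).restrict sᶜ = β := by
  rw [restrict_add, restrict_add, restrict_eq_zero.mpr hβ, restrict_eq_zero.mpr hα, add_zero,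
    zero_add, restrict_eq_self_of_ae_mem (mem_ae_iff.mpr hα),
    restrict_eq_self_of_ae_mem (s := sᶜ) (compl_mem_ae_iff.mpr hβ)]
  exact ⟨rfl, rfl⟩

lemma eq_of_add_eq_add_of_separatingSet {α β α' β' : Measure X} {s : Set X}
    (h : α + β = α' + β') (hα : α sᶜ = 0) (hβ : β s = 0) (hα' : α' sᶜ = 0) (hβ' : β' s = 0) :
    α = α' ∧ β = β' := by
  obtain ⟨h₁, h₂⟩ := restrict_add_eq_and_restrict_compl_add_eq hα hβ
  obtain ⟨h₁', h₂'⟩ := restrict_add_eq_and_restrict_compl_add_eq hα' hβ'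
  exact ⟨h₁.symm.trans (h ▸ h₁'), h₂.symm.trans (h ▸ h₂')⟩

lemma eq_of_add_eq_add_of_absolutelyContinuous_of_mutuallySingular
    {α β α' β' ρ : Measure X} (h : α + β = α' + β') (hα : α ≪ ρ) (hα' : α' ≪ ρ)
    (hβ : β ⟂ₘ ρ) (hβ' : β' ⟂ₘ ρ) : α = α' ∧ β = β' := by
  have hρ : ρ (hβ.nullSet ∩ hβ'.nullSet)ᶜ = 0 := by
    rw [compl_inter]
    exact measure_union_null hβ.measure_compl_nullSet hβ'.measure_compl_nullSet
  exact eq_of_add_eq_add_of_separatingSet h (hα hρ)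
    (measure_mono_null inter_subset_left hβ.measure_nullSet) (hα' hρ)
    (measure_mono_null inter_subset_right hβ'.measure_nullSet)

end MeasureTheory.Measure

noncomputable def infinityPartSet (m l : Measure X) : Set X :=
  l.sigmaFiniteSetᶜ ∩ m.sigmaFiniteSet

section Existence

variable {k l m ks : Measure X}

lemma measurableSet_infinityPartSet : MeasurableSet (infinityPartSet m l) :=
  measurableSet_sigmaFiniteSet.compl.inter measurableSet_sigmaFiniteSet

instance : SigmaFinite (m.restrict (infinityPartSet m l)) := by
  rw [infinityPartSet, ← restrict_restrict measurableSet_sigmaFiniteSet.compl]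
  infer_instance

lemma restrict_infinityPartSet_sigmaFiniteSet :
    m.restrict (infinityPartSet m l) l.sigmaFiniteSet = 0 := by
  rw [restrict_apply measurableSet_sigmaFiniteSet, infinityPartSet, ← inter_assoc,
    inter_compl_self, empty_inter, measure_empty]

lemma isZeroInftySet_restrict_compl_infinityPartSet [SFinite l] [SFinite m] (hm : m ≪ l)
    (hU : IsZeroInftySet l U) : IsZeroInftySet (m.restrict (infinityPartSet m l)ᶜ) U := by
  refine ⟨hU.1, fun V hVU hV => ?_⟩
  have hVW : m (V ∩ l.sigmaFiniteSet) = 0 := hm <| measure_mono_null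
    (inter_subset_inter_left _ hVU) (hU.measure_inter_eq_zero measurableSet_sigmaFiniteSet)
  rw [restrict_apply hV, infinityPartSet, compl_inter, compl_compl, inter_union_distrib_left,
    measure_congr (union_ae_eq_right_of_ae_eq_empty (ae_eq_empty.mpr hVW))]
  exact measure_eq_zero_or_top_of_subset_compl_sigmaFiniteSet inter_subset_right

lemma isLebesgueInftyDecomp_restrict_infinityPartSet [SFinite l] [SFinite m] (hk : k = m + ks)
    (hm : m ≪ l) (hks : ks ⟂ₘ l) :
    IsLebesgueInftyDecomp k l (m.restrict (infinityPartSet m l)ᶜ)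
      (m.restrict (infinityPartSet m l)) ks := by
  have hE := measurableSet_infinityPartSet (m := m) (l := l)
  have hka : m.restrict (infinityPartSet m l)ᶜ ≪ l :=
    restrict_le_self.absolutelyContinuous.trans hm
  have hki : m.restrict (infinityPartSet m l) ≪ l :=
    restrict_le_self.absolutelyContinuous.trans hm
  refine ⟨by rw [add_comm (m.restrict _), restrict_add_restrict_compl hE, hk],
    ⟨hka, fun U hU => isZeroInftySet_restrict_compl_infinityPartSet hm hU⟩,
    ⟨hki, inferInstance, _, isZeroInftySet_compl_sigmaFiniteSet,
      (compl_compl l.sigmaFiniteSet).symm ▸ restrict_infinityPartSet_sigmaFiniteSet⟩,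
    hks, ⟨_, hE, ?_, ?_⟩, hks.symm.mono_ac hka .rfl, hks.symm.mono_ac hki .rfl⟩
  · rw [restrict_apply hE, inter_compl_self, measure_empty]
  · rw [restrict_apply hE.compl, compl_inter_self, measure_empty]

theorem exists_isLebesgueInftyDecomp (k l : Measure X) [SFinite k] [SFinite l] :
    ∃ ka ki ks, IsLebesgueInftyDecomp k l ka ki ks :=
  ⟨_, _, _, isLebesgueInftyDecomp_restrict_infinityPartSet
    ((haveLebesgueDecomposition_add k l.toFinite).trans (add_comm _ _))
    ((withDensity_absolutelyContinuous _ _).trans (toFinite_absolutelyContinuous l))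
    ((mutuallySingular_singularPart k l.toFinite).mono_ac .rfl (absolutelyContinuous_toFinite l))⟩

end Existence

namespace IsLebesgueInftyDecomp

variable {k l ka ki ks ka' ki' ks' : Measure X}

lemma ac_add_eq_and_singular_eq (h : IsLebesgueInftyDecomp k l ka ki ks)
    (h' : IsLebesgueInftyDecomp k l ka' ki' ks') : ka + ki = ka' + ki' ∧ ks = ks' :=
  eq_of_add_eq_add_of_absolutelyContinuous_of_mutuallySingular (h.1.symm.trans h'.1)
    (h.2.1.1.add_left h.2.2.1.1) (h'.2.1.1.add_left h'.2.2.1.1) h.2.2.2.1 h'.2.2.2.1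

lemma exists_separatingSet (h : IsLebesgueInftyDecomp k l ka ki ks) :
    ∃ D U, IsZeroInftySet l U ∧ D ⊆ U ∧ MeasurableSet D ∧ ka D = 0 ∧ ki Dᶜ = 0 := by
  obtain ⟨-, -, ⟨-, -, U, hU, hkiU⟩, -, hsep, -, -⟩ := h
  refine ⟨hsep.nullSet ∩ U, U, hU, inter_subset_right, hsep.measurableSet_nullSet.inter hU.1,
    measure_mono_null inter_subset_left hsep.measure_nullSet, ?_⟩
  rw [compl_inter]
  exact measure_union_null hsep.measure_compl_nullSet hkiU

theorem unique (h : IsLebesgueInftyDecomp k l ka ki ks)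
    (h' : IsLebesgueInftyDecomp k l ka' ki' ks') : ka' = ka ∧ ki' = ki ∧ ks' = ks := by
  obtain ⟨hm, hks⟩ := h.ac_add_eq_and_singular_eq h'
  have : SigmaFinite ki := h.2.2.1.2.1
  have : SigmaFinite ki' := h'.2.2.1.2.1
  obtain ⟨D, U, hU, hDU, hD, hkaD, hkiD⟩ := h.exists_separatingSet
  obtain ⟨D', U', hU', hDU', hD', hka'D', hki'D'⟩ := h'.exists_separatingSet
  have hka'D := (h'.2.1.2 U hU).measure_eq_zero_of_add_eq_add hm hDU hD hkaD
  have hkaD' := (h.2.1.2 U' hU').measure_eq_zero_of_add_eq_add hm.symm hDU' hD' hka'D'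
  obtain ⟨hka, hki⟩ := eq_of_add_eq_add_of_separatingSet hm (s := (D ∪ D')ᶜ)
    (by rw [compl_compl]; exact measure_union_null hkaD hkaD')
    (measure_mono_null (compl_subset_compl.mpr subset_union_left) hkiD)
    (by rw [compl_compl]; exact measure_union_null hka'D hka'D')
    (measure_mono_null (compl_subset_compl.mpr subset_union_right) hki'D')
  exact ⟨hka.symm, hki.symm, hks.symm⟩

end IsLebesgueInftyDecomp

end

theorem lebesgue_decomposition_sfinite_general {Y : Type*} [MeasurableSpace Y]
    (k l : Measure Y) [SFinite k] [SFinite l] :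
    ∃ ka ki ks : Measure Y, IsLebesgueInftyDecomp k l ka ki ks ∧
      ∀ ka' ki' ks' : Measure Y, IsLebesgueInftyDecomp k l ka' ki' ks' →
        ka' = ka ∧ ki' = ki ∧ ks' = ks := by
  obtain ⟨ka, ki, ks, h⟩ := exists_isLebesgueInftyDecomp k l
  exact ⟨ka, ki, ks, h, fun _ _ _ h' => h.unique h'⟩

/-- Lebesgue decomposition for s-finite measures on a standard Borel space, with an infinity
part: the decomposition exists and is unique. -/
theorem lebesgue_decomposition_sfinite {Y : Type*} [MeasurableSpace Y] [StandardBorelSpace Y]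
    (k l : Measure Y) [SFinite k] [SFinite l] :
    ∃ ka ki ks : Measure Y, IsLebesgueInftyDecomp k l ka ki ks ∧
      ∀ ka' ki' ks' : Measure Y, IsLebesgueInftyDecomp k l ka' ki' ks' →
        ka' = ka ∧ ki' = ki ∧ ks' = ks :=
  lebesgue_decomposition_sfinite_general k l
end

section
/- Randomisation of s-finite kernels: if σ is an s-finite kernel from a measurable space S to a standard Borel space T, then there exists a measurable partial function g : S × [0,∞) ⇀ T such that σ(s) = g(s,·)_*(λ|_{[0,∞)}) for all s ∈ S, where λ is Lebesgue measure. Conversely, every kernel arising as such a pushforward of Lebesgue measure on [0,∞) along a measurable partial function is s-finite. -/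
/-!
An s-finite kernel is a countable sum of finite kernels, and splitting a finite kernel into
finitely many equal parts makes it a countable sum `∑ κₙ` of sub-probability kernels. Each `κₙ`,
completed to a Markov kernel on `T ⊕ Unit` by sending the missing mass to `Sum.inr ()`, is the
image of the uniform measure on `[0,1]` under a jointly measurable map (randomisation of Markov
kernels into standard Borel spaces). Since `r ↦ (⌊r⌋₊, r - ⌊r⌋₊)` carries Lebesgue measure on
`[0,∞)` to counting measure times uniform measure, stacking the `n`-th map on `[n, n+1)` realises
`σ`. Conversely, such a `σ` is the pullback along `Sum.inl` of the image under `g` of the s-finite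
kernel `s ↦ δₛ ⊗ λ|[0,∞)`.
-/

open MeasureTheory ProbabilityTheory Set Topology
open scoped ENNReal

instance Sum.borelSpace {α β : Type*} [TopologicalSpace α] [MeasurableSpace α] [BorelSpace α]
    [TopologicalSpace β] [MeasurableSpace β] [BorelSpace β] : BorelSpace (α ⊕ β) := by
  have h_image : (∀ A : Set α, MeasurableSet A → MeasurableSet[borel (α ⊕ β)] (Sum.inl '' A)) ∧
      ∀ B : Set β, MeasurableSet B → MeasurableSet[borel (α ⊕ β)] (Sum.inr '' B) := by
    let : MeasurableSpace (α ⊕ β) := borel _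
    have : BorelSpace (α ⊕ β) := ⟨rfl⟩
    exact ⟨fun A hA => IsOpenEmbedding.inl.measurableEmbedding.measurableSet_image' hA,
      fun B hB => IsOpenEmbedding.inr.measurableEmbedding.measurableSet_image' hB⟩
  refine ⟨le_antisymm (fun s hs => ?_) (MeasurableSpace.generateFrom_le fun U hU => ?_)⟩
  · rw [measurableSet_sum_iff] at hs
    rw [← image_preimage_inl_union_image_preimage_inr s]
    exact (h_image.1 _ hs.1).union (h_image.2 _ hs.2)
  · exact measurableSet_sum_iff.2 ⟨(hU.preimage continuous_inl).measurableSet,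
      (hU.preimage continuous_inr).measurableSet⟩

instance Sum.standardBorelSpace {α β : Type*} [MeasurableSpace α] [StandardBorelSpace α]
    [MeasurableSpace β] [StandardBorelSpace β] : StandardBorelSpace (α ⊕ β) := by
  let := upgradeStandardBorel α
  let := upgradeStandardBorel β
  exact ⟨⟨inferInstance, inferInstance, inferInstance⟩⟩

theorem MeasurableEmbedding.inl {α β : Type*} [MeasurableSpace α] [MeasurableSpace β] :
    MeasurableEmbedding (Sum.inl : α → α ⊕ β) :=
  ⟨Sum.inl_injective, measurable_inl, fun _ hs => hs.inl_image⟩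

noncomputable def natFloorFract (r : ℝ) : ℕ × unitInterval :=
  (⌊r⌋₊, projIcc 0 1 zero_le_one (r - ⌊r⌋₊))

theorem measurable_natFloorFract : Measurable natFloorFract :=
  Nat.measurable_floor.prodMk (continuous_projIcc.measurable.comp
    (measurable_id.sub (measurable_from_nat.comp Nat.measurable_floor)))

theorem map_projIcc_volume_restrict_Icc :
    (volume.restrict (Icc (0:ℝ) 1)).map (projIcc 0 1 zero_le_one) =
      (volume : Measure unitInterval) := by
  rw [← unitInterval.measurePreserving_coe.map_eq, Measure.map_map continuous_projIcc.measurable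
    measurable_subtype_coe]
  convert Measure.map_id
  exact funext fun x => projIcc_val zero_le_one x

theorem map_natFloorFract_restrict_Ico (n : ℕ) :
    (volume.restrict (Ico (n:ℝ) (n + 1))).map natFloorFract =
      (volume : Measure unitInterval).map (Prod.mk n) := by
  have h_floor : natFloorFract =ᵐ[volume.restrict (Ico (n:ℝ) (n + 1))]
      (Prod.mk n ∘ projIcc 0 1 zero_le_one) ∘ fun r : ℝ => r - n := by
    filter_upwards [ae_restrict_mem measurableSet_Ico] with r hr
    rw [natFloorFract, (Nat.floor_eq_iff (n.cast_nonneg.trans hr.1)).2 hr]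
    rfl
  have h_shift : (volume.restrict (Ico (n:ℝ) (n + 1))).map (fun r : ℝ => r - n) =
      volume.restrict (Icc (0:ℝ) 1) := by
    rw [← Measure.restrict_congr_set Ico_ae_eq_Icc]
    simpa [preimage_sub_const_Ico, add_comm] using
      ((measurePreserving_sub_right volume (n:ℝ)).restrict_preimage
        (measurableSet_Ico (a := (0:ℝ)) (b := 1))).map_eq
  rw [Measure.map_congr h_floor, ← Measure.map_map (by fun_prop) (by fun_prop), h_shift,
    ← Measure.map_map measurable_prodMk_left continuous_projIcc.measurable,
    map_projIcc_volume_restrict_Icc]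

theorem map_natFloorFract_restrict_Ici :
    (volume.restrict (Ici (0:ℝ))).map natFloorFract =
      Measure.sum fun n : ℕ => (volume : Measure unitInterval).map (Prod.mk n) := by
  have h_union : Ici (0:ℝ) = ⋃ n : ℕ, Ico (n:ℝ) (n + 1) := by
    ext r
    simp only [mem_Ici, mem_iUnion, mem_Ico]
    exact ⟨fun hr => ⟨⌊r⌋₊, Nat.floor_le hr, Nat.lt_floor_add_one r⟩,
      fun ⟨n, hn, _⟩ => n.cast_nonneg.trans hn⟩
  have h_disj : Pairwise (Function.onFun Disjoint fun n : ℕ => Ico (n:ℝ) (n + 1)) := by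
    intro i j hij
    simpa [Function.onFun] using pairwise_disjoint_Ico_intCast ℝ (Nat.cast_injective.ne hij)
  rw [h_union, Measure.restrict_iUnion h_disj fun _ => measurableSet_Ico,
    Measure.map_sum measurable_natFloorFract.aemeasurable]
  simp_rw [map_natFloorFract_restrict_Ico]

theorem map_uncurry_comp_natFloorFract {α : Type*} [MeasurableSpace α]
    {F : ℕ → unitInterval → α} (hF : ∀ n, Measurable (F n)) :
    (volume.restrict (Ici (0:ℝ))).map (Function.uncurry F ∘ natFloorFract) =
      Measure.sum fun n => volume.map (F n) := by
  have hF' : Measurable (Function.uncurry F) := measurable_from_prod_countable_right hF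
  rw [← Measure.map_map hF' measurable_natFloorFract, map_natFloorFract_restrict_Ici,
    Measure.map_sum hF'.aemeasurable]
  simp_rw [Measure.map_map hF' measurable_prodMk_left]
  rfl

namespace ProbabilityTheory.Kernel

variable {S T : Type*} [MeasurableSpace S] [MeasurableSpace T]

theorem isSFiniteKernel_of_apply_eq_measure_preimage_image {X U : Type*} [MeasurableSpace X]
    [MeasurableSpace U] {e : T → U} (he : MeasurableEmbedding e) (μ : Measure X) [SFinite μ]
    {g : S × X → U} (hg : Measurable g) {σ : Kernel S T}
    (hσ : ∀ s V, MeasurableSet V → σ s V = μ {x | g (s, x) ∈ e '' V}) :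
    IsSFiniteKernel σ := by
  have : σ = comapRight ((Kernel.id ×ₖ const S μ).map g) he := by
    ext s V hV
    have hV' := he.measurableSet_image' hV
    rw [hσ s V hV, comapRight_apply' _ _ _ hV, map_apply' _ hg _ hV', prod_apply, id_apply,
      const_apply, Measure.dirac_prod, Measure.map_apply measurable_prodMk_left (hg hV')]
    rfl
  rw [this]
  infer_instance

noncomputable def addCemetery (κ : Kernel S T) : Kernel S (T ⊕ Unit) :=
  κ.map Sum.inl + withDensity (const S (Measure.dirac (Sum.inr ()))) fun s _ => 1 - κ s univ

theorem addCemetery_apply (κ : Kernel S T) (s : S) :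
    κ.addCemetery s = (κ s).map Sum.inl + (1 - κ s univ) • Measure.dirac (Sum.inr ()) := by
  rw [addCemetery, add_apply, map_apply _ measurable_inl, Kernel.withDensity_apply _
    (by exact (measurable_const.sub (κ.measurable_coe .univ)).comp measurable_fst), const_apply,
    withDensity_const]

theorem isMarkovKernel_addCemetery {κ : Kernel S T} (hκ : ∀ s, κ s univ ≤ 1) :
    IsMarkovKernel κ.addCemetery := by
  refine ⟨fun s => ⟨?_⟩⟩
  rw [addCemetery_apply, Measure.add_apply, Measure.smul_apply, Measure.map_apply measurable_inl
    .univ, preimage_univ, measure_univ (μ := Measure.dirac _), smul_eq_mul, mul_one]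
  exact add_tsub_cancel_of_le (hκ s)

theorem comapRight_addCemetery (κ : Kernel S T) :
    comapRight κ.addCemetery MeasurableEmbedding.inl = κ := by
  ext s V hV
  rw [comapRight_apply' _ _ _ hV, addCemetery_apply, Measure.add_apply, Measure.smul_apply,
    Measure.map_apply measurable_inl hV.inl_image, preimage_image_eq V Sum.inl_injective,
    Measure.dirac_apply' _ hV.inl_image, indicator_of_notMem (by simp)]
  simp

theorem exists_measurable_comap_inl_map_eq_unitInterval [StandardBorelSpace T] {κ : Kernel S T}
    (hκ : ∀ s, κ s univ ≤ 1) :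
    ∃ f : S → unitInterval → T ⊕ Unit, Measurable (Function.uncurry f) ∧
      ∀ s, (volume.map (f s)).comap Sum.inl = κ s := by
  have := isMarkovKernel_addCemetery hκ
  obtain ⟨f, hf, hfκ⟩ := κ.addCemetery.exists_measurable_map_eq_unitInterval
  refine ⟨f, hf, fun s => ?_⟩
  rw [hfκ, ← comapRight_apply _ MeasurableEmbedding.inl, comapRight_addCemetery]

theorem exists_sum_eq_of_isFiniteKernel (η : Kernel S T) [IsFiniteKernel η] :
    ∃ κ : ℕ → Kernel S T, (∀ n s, κ n s univ ≤ 1) ∧ Kernel.sum κ = η := by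
  obtain ⟨m, hm⟩ := ENNReal.exists_nat_gt η.bound_ne_top
  have hm0 : (m : ℝ≥0∞) ≠ 0 := (zero_le.trans_lt hm).ne'
  let c : ℕ → ℝ≥0∞ := fun k => if k < m then (m : ℝ≥0∞)⁻¹ else 0
  refine ⟨fun k => η.withDensity fun _ _ => c k, fun k s => ?_, ?_⟩
  · rw [Kernel.withDensity_apply _ measurable_const, withDensity_const, Measure.smul_apply,
      smul_eq_mul]
    calc c k * η s univ ≤ (m : ℝ≥0∞)⁻¹ * m := by
          gcongr
          · exact ite_le_sup _ _ _ |>.trans (by simp)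
          · exact (η.measure_le_bound s univ).trans hm.le
      _ = 1 := ENNReal.inv_mul_cancel hm0 (ENNReal.natCast_ne_top m)
  · have h_one : ∑' k, c k = 1 := by
      rw [tsum_eq_sum (s := Finset.range m) fun k hk => if_neg (by simpa using hk)]
      simp [Finset.sum_ite_of_true, ENNReal.mul_inv_cancel hm0 (ENNReal.natCast_ne_top m)]
    rw [← withDensity_tsum _ fun _ => measurable_const]
    convert η.withDensity_one
    ext s t
    rw [tsum_apply (Pi.summable.2 fun _ => Pi.summable.2 fun _ => ENNReal.summable),
      ENNReal.tsum_apply, h_one, Pi.one_apply, Pi.one_apply]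

theorem exists_sum_eq_of_isSFiniteKernel (σ : Kernel S T) [IsSFiniteKernel σ] :
    ∃ κ : ℕ → Kernel S T, (∀ n s, κ n s univ ≤ 1) ∧ Kernel.sum κ = σ := by
  choose κ hκ hκσ using fun n => exists_sum_eq_of_isFiniteKernel (seq σ n)
  refine ⟨fun i => κ (Nat.unpair i).1 (Nat.unpair i).2, fun i => hκ _ _, ?_⟩
  ext s : 1
  simp_rw [sum_apply, ← measure_sum_seq σ s, ← hκσ, sum_apply, Measure.sum_sum]
  exact Measure.sum_comp_equiv Nat.pairEquiv.symm fun p => κ p.1 p.2 s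

end ProbabilityTheory.Kernel

/-- Randomisation of s-finite kernels: an s-finite kernel `σ` from a measurable space `S` to a
standard Borel space `T` arises by pushing forward Lebesgue measure on `[0,∞)` along a
measurable partial function `g : S × [0,∞) ⇀ T` (formalised as a measurable function into
`T ⊕ Unit`, points sent to `Sum.inr` being discarded); conversely every kernel arising this
way is s-finite. -/
theorem randomisation_sfinite_kernel {S T : Type*} [MeasurableSpace S] [MeasurableSpace T]
    [StandardBorelSpace T] :
    (∀ σ : Kernel S T, IsSFiniteKernel σ →
      ∃ g : S × ℝ → T ⊕ Unit, Measurable g ∧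
        ∀ s, ∀ V, MeasurableSet V →
          σ s V = (volume.restrict (Set.Ici (0:ℝ))) {r : ℝ | g (s, r) ∈ Sum.inl '' V}) ∧
    (∀ (σ : Kernel S T) (g : S × ℝ → T ⊕ Unit), Measurable g →
      (∀ s, ∀ V, MeasurableSet V →
        σ s V = (volume.restrict (Set.Ici (0:ℝ))) {r : ℝ | g (s, r) ∈ Sum.inl '' V}) →
      IsSFiniteKernel σ) := by
  -- The partial map `S × [0,∞) ⇀ T` is `g`, undefined where `g` takes the value `Sum.inr ()`.
  refine ⟨fun σ _ => ?_, fun σ g hg hσ =>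
    Kernel.isSFiniteKernel_of_apply_eq_measure_preimage_image MeasurableEmbedding.inl _ hg hσ⟩
  obtain ⟨κ, hκ, rfl⟩ := Kernel.exists_sum_eq_of_isSFiniteKernel σ
  choose f hf hfκ using fun n => Kernel.exists_measurable_comap_inl_map_eq_unitInterval (hκ n)
  let g : S × ℝ → T ⊕ Unit := fun p => f (natFloorFract p.2).1 p.1 (natFloorFract p.2).2
  have hf' : Measurable fun q : (S × unitInterval) × ℕ => f q.2 q.1.1 q.1.2 :=
    measurable_from_prod_countable_left hf
  have hg : Measurable g := hf'.comp <|
    (measurable_fst.prodMk (measurable_natFloorFract.snd.comp measurable_snd)).prodMk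
      (measurable_natFloorFract.fst.comp measurable_snd)
  refine ⟨g, hg, fun s V hV => ?_⟩
  calc Kernel.sum κ s V = ∑' n, volume.map (f n s) (Sum.inl '' V) := by
        simp_rw [Kernel.sum_apply' _ _ hV, ← hfκ, MeasurableEmbedding.inl.comap_apply]
    _ = (volume.restrict (Ici 0)).map (Function.uncurry (fun n => f n s) ∘ natFloorFract)
          (Sum.inl '' V) := by
        rw [map_uncurry_comp_natFloorFract fun n => (hf n).of_uncurry_left,
          Measure.sum_apply _ hV.inl_image]
    _ = _ := Measure.map_apply (hg.comp measurable_prodMk_left) hV.inl_image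
end

section
/- Total randomisation criterion: for an s-finite measure σ on a nonempty standard Borel space T, there exists a total measurable function g : ℝ → T with σ = g_* λ (λ Lebesgue measure on ℝ) if and only if σ(T) = ∞. -/
/-!
A probability measure on a standard Borel space is the image of the uniform measure on `[0, 1]`
(`MeasureTheory.Measure.exists_measurable_map_eq`), so after an affine change of variables a finite
measure `μ` is the image of Lebesgue measure on any interval of length `μ univ`. Write `σ = ∑ μₙ`
with every `μₙ` finite. Since `σ univ = ∞`, the partial sums of the masses `μₙ univ` are unbounded,
so consecutive intervals of these lengths tile `[0, ∞)`, and gluing the maps on the tiles exhibits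
`σ` as an image of Lebesgue measure on `[0, ∞)`. Applying this to `σ / 2` and precomposing with
`|·|`, which pushes Lebesgue measure to twice its restriction to `[0, ∞)`, covers the whole line.
Conversely, an image of Lebesgue measure has total mass `λ ℝ = ∞`.
-/

open MeasureTheory Set Filter

theorem ENNReal.tendsto_sum_range_toReal_atTop {f : ℕ → ENNReal} (hf : ∀ n, f n ≠ ⊤)
    (hsum : ∑' n, f n = ⊤) :
    Tendsto (fun n => ∑ i ∈ Finset.range n, (f i).toReal) atTop atTop := by
  refine (not_summable_iff_tendsto_nat_atTop_of_nonneg fun _ => ENNReal.toReal_nonneg).1 ?_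
  intro h
  have := ENNReal.ofReal_tsum_of_nonneg (fun _ => ENNReal.toReal_nonneg) h
  simp only [ENNReal.ofReal_toReal (hf _)] at this
  exact ENNReal.ofReal_ne_top (this.trans hsum)

theorem Real.map_volume_abs :
    volume.map (fun x : ℝ => |x|) = (2 : ENNReal) • volume.restrict (Ici 0) := by
  have h_nonneg : (volume.restrict (Ici (0 : ℝ))).map (fun x => |x|) = volume.restrict (Ici 0) := by
    rw [Measure.map_congr (ae_restrict_of_forall_mem measurableSet_Ici
      fun x (hx : 0 ≤ x) => abs_of_nonneg hx), Measure.map_id']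
  have h_neg : (volume.restrict (Ici (0 : ℝ))ᶜ).map (fun x => |x|) = volume.restrict (Ici 0) := by
    rw [Measure.map_congr (ae_restrict_of_forall_mem measurableSet_Ici.compl
      fun x (hx : ¬ 0 ≤ x) => abs_of_neg (not_le.1 hx)),
      ← Measure.restrict_congr_set Ioi_ae_eq_Ici]
    calc (volume.restrict (Ici 0)ᶜ).map (fun x : ℝ => -x)
        = (volume.map Neg.neg).restrict (Ioi 0) := by
          rw [Measure.restrict_map measurable_neg measurableSet_Ioi]
          congr 2
          ext x
          simp
      _ = volume.restrict (Ioi 0) := by rw [Measure.map_neg_eq_self]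
  calc volume.map (fun x : ℝ => |x|)
      = (volume.restrict (Ici (0 : ℝ)) + volume.restrict (Ici 0)ᶜ).map (fun x => |x|) := by
        rw [Measure.restrict_add_restrict_compl measurableSet_Ici]
    _ = (2 : ENNReal) • volume.restrict (Ici 0) := by
        rw [Measure.map_add _ _ measurable_abs, h_nonneg, h_neg, two_smul]

theorem Real.map_volume_restrict_Icc_div_sub {a b : ℝ} (hab : a < b) :
    (volume.restrict (Icc a b)).map (fun x => (x - a) / (b - a)) =
      ENNReal.ofReal (b - a) • volume.restrict (Icc 0 1) := by
  have hc : 0 < b - a := sub_pos.2 hab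
  have hmeas : Measurable fun x : ℝ => (x - a) / (b - a) := by fun_prop
  have hpre : (fun x : ℝ => (x - a) / (b - a)) ⁻¹' Icc 0 1 = Icc a b := by
    ext x
    simp [le_div_iff₀ hc, div_le_one hc]
  have hmap : volume.map (fun x : ℝ => (x - a) / (b - a)) = ENNReal.ofReal (b - a) • volume := by
    have : (fun x : ℝ => (x - a) / (b - a)) = (· * (b - a)⁻¹) ∘ (· + -a) := by
      ext x; simp [div_eq_mul_inv, sub_eq_add_neg]
    rw [this, ← Measure.map_map (by fun_prop) (by fun_prop), map_add_right_eq_self,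
      Real.map_volume_mul_right (inv_ne_zero hc.ne'), inv_inv, abs_of_pos hc]
  rw [← hpre, ← Measure.restrict_map hmeas measurableSet_Icc, hmap, Measure.restrict_smul]

theorem exists_measurable_map_restrict_Ici_eq_sum {Y : Type*} [MeasurableSpace Y] (ρ : Measure ℝ)
    {E : ℕ → ℝ} (hE : Monotone E) (hE_top : ¬BddAbove (range E)) (μ : ℕ → Measure Y)
    (hμ : ∀ n, ∃ g : ℝ → Y, Measurable g ∧ (ρ.restrict (Ico (E n) (E (n + 1)))).map g = μ n) :
    ∃ g : ℝ → Y, Measurable g ∧ (ρ.restrict (Ici (E 0))).map g = Measure.sum μ := by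
  classical
  choose f hf hfμ using hμ
  have h_ex : ∀ x, ∃ n, x < E (n + 1) := fun x => by
    obtain ⟨_, ⟨n, rfl⟩, hx⟩ := not_bddAbove_iff.1 hE_top x
    exact ⟨n, hx.trans_le (hE n.le_succ)⟩
  have h_find : ∀ n, ∀ x ∈ Ico (E n) (E (n + 1)), Nat.find (h_ex x) = n := by
    rintro n x ⟨hnx, hxn⟩
    exact (Nat.find_eq_iff _).2 ⟨hxn, fun m hm => not_lt.2 ((hE hm).trans hnx)⟩
  have h_partition : ρ.restrict (Ici (E 0)) =
      Measure.sum fun n => ρ.restrict (Ico (E n) (E (n + 1))) := by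
    have h_disj : Pairwise (Function.onFun Disjoint fun n => Ico (E n) (E (n + 1))) :=
      hE.pairwise_disjoint_on_Ico_succ
    rw [← Measure.restrict_iUnion h_disj fun _ => measurableSet_Ico]
    congr
    simpa using (iUnion_Ico_map_succ_eq_Ici (fun n => hE n.zero_le) hE_top).symm
  have hg : Measurable fun x => f (Nat.find (h_ex x)) x :=
    Measurable.find hf (fun _ => measurableSet_Iio) h_ex
  refine ⟨_, hg, ?_⟩
  rw [h_partition, Measure.map_sum hg.aemeasurable]
  congr with n : 1
  rw [Measure.map_congr (g := f n) (ae_restrict_of_forall_mem measurableSet_Ico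
    fun x hx => by simp only [h_find n x hx]), hfμ]

section
variable {Y : Type*} [MeasurableSpace Y] [StandardBorelSpace Y] [Nonempty Y]

theorem exists_measurable_map_restrict_Icc_zero_one_eq (μ : Measure Y) [IsProbabilityMeasure μ] :
    ∃ g : ℝ → Y, Measurable g ∧ (volume.restrict (Icc (0 : ℝ) 1)).map g = μ := by
  obtain ⟨f, hf, rfl⟩ := μ.exists_measurable_map_eq
  have hproj : Measurable (projIcc (0 : ℝ) 1 zero_le_one) := continuous_projIcc.measurable
  refine ⟨f ∘ projIcc 0 1 zero_le_one, hf.comp hproj, ?_⟩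
  rw [← Measure.map_map hf hproj, ← unitInterval.measurePreserving_coe.map_eq,
    Measure.map_map hproj measurable_subtype_coe]
  simp [Function.comp_def, projIcc_val]

theorem exists_measurable_map_restrict_Icc_eq (μ : Measure Y) [IsFiniteMeasure μ] {a b : ℝ}
    (hμ : μ univ = ENNReal.ofReal (b - a)) :
    ∃ g : ℝ → Y, Measurable g ∧ (volume.restrict (Icc a b)).map g = μ := by
  obtain ⟨y⟩ := ‹Nonempty Y›
  rcases le_or_gt b a with hba | hab
  · refine ⟨fun _ => y, measurable_const, ?_⟩
    have hμ0 : μ = 0 := Measure.measure_univ_eq_zero.1 (by simp [hμ, hba])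
    simp [Measure.map_const, hμ0, hba]
  · have hμ0 : μ univ ≠ 0 := by simp [hμ, hab]
    have : NeZero μ := ⟨Measure.measure_univ_ne_zero.1 hμ0⟩
    obtain ⟨g, hg, hgp⟩ := exists_measurable_map_restrict_Icc_zero_one_eq ((μ univ)⁻¹ • μ)
    refine ⟨g ∘ fun x => (x - a) / (b - a), hg.comp (by fun_prop), ?_⟩
    rw [← Measure.map_map hg (by fun_prop), Real.map_volume_restrict_Icc_div_sub hab,
      Measure.map_smul, hgp, ← hμ, smul_smul, ENNReal.mul_inv_cancel hμ0 (measure_ne_top μ _),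
      one_smul]

theorem exists_measurable_map_restrict_Ici_eq (σ : Measure Y) [SFinite σ] (hσ : σ univ = ⊤) :
    ∃ g : ℝ → Y, Measurable g ∧ (volume.restrict (Ici 0)).map g = σ := by
  set E : ℕ → ℝ := fun n => ∑ i ∈ Finset.range n, (sfiniteSeq σ i univ).toReal
  have hE : Monotone E := monotone_nat_of_le_succ fun n => by simp [E, Finset.sum_range_succ]
  have hE_top : ¬BddAbove (range E) := not_bddAbove_of_tendsto_atTop <|
    ENNReal.tendsto_sum_range_toReal_atTop (fun _ => measure_ne_top _ _) <| by
      rw [← Measure.sum_apply _ MeasurableSet.univ, sum_sfiniteSeq, hσ]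
  obtain ⟨g, hg, hgσ⟩ :=
    exists_measurable_map_restrict_Ici_eq_sum volume hE hE_top (sfiniteSeq σ) fun n => by
      rw [Measure.restrict_congr_set Ico_ae_eq_Icc]
      exact exists_measurable_map_restrict_Icc_eq _
        (by simp [E, Finset.sum_range_succ, ENNReal.ofReal_toReal])
  refine ⟨g, hg, ?_⟩
  simpa [E, sum_sfiniteSeq] using hgσ

end

/-- Total randomisation criterion: an s-finite measure `σ` on a nonempty standard Borel space
`T` is the pushforward of Lebesgue measure on `ℝ` along a total measurable function iff
`σ T = ∞`. -/
theorem total_randomisation_iff {T : Type*} [MeasurableSpace T] [StandardBorelSpace T]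
    [Nonempty T] (σ : Measure T) [SFinite σ] :
    (∃ g : ℝ → T, Measurable g ∧ σ = Measure.map g volume) ↔ σ Set.univ = ⊤ := by
  refine ⟨fun ⟨g, hg, hσ⟩ => ?_, fun hσ => ?_⟩
  · rw [hσ, Measure.map_apply hg MeasurableSet.univ, preimage_univ, Real.volume_univ]
  · obtain ⟨g, hg, hgσ⟩ :=
      exists_measurable_map_restrict_Ici_eq ((2 : ENNReal)⁻¹ • σ) (by simp [hσ])
    refine ⟨g ∘ fun x => |x|, hg.comp measurable_abs, ?_⟩
    rw [← Measure.map_map hg measurable_abs, Real.map_volume_abs, Measure.map_smul, hgσ,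
      smul_smul, ENNReal.mul_inv_cancel two_ne_zero ENNReal.ofNat_ne_top, one_smul]
end
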